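/- Let C1, C2 be full triangulated subcategories of a triangulated category D with C2 ⊆ C1^⊥, and let C be the full triangulated subcategory generated by C1 ∪ C2. If both C1 and C2 are left and right admissible in D, then C is left and right admissible in D. -/

import Mathlib

/-!
Given `Y`, take the `S₁`-coreflection `A₁ ⟶ Y`, whose cone `Y'` is right orthogonal to `S₁`,
and then the `S₂`-coreflection `A₂ ⟶ Y'`. Let `X` be the extension of `A₂` by `A₁` along
`A₂ ⟶ Y' ⟶ A₁⟦1⟧`; it lies in the generated subcategory, and a morphism of triangles gives
`X ⟶ Y`. A five-lemma argument shows that `Hom(E, X) → Hom(E, Y)` is bijective for `E` in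
`S₁ ∪ S₂` (for `E ∈ S₁` because `Hom(S₁, S₂) = 0`). So the cone of `X ⟶ Y` is right orthogonal
to `S₁ ∪ S₂`, hence to the whole generated subcategory, and `X ⟶ Y` is a coreflection into it.
Left admissibility is the dual statement, proved in the opposite category, where the roles of
`S₁` and `S₂` are exchanged.
-/

open CategoryTheory Limits Pretriangulated

universe v u

/-- The set of objects of a strictly full triangulated subcategory. -/
structure IsTriangulatedSub (D : Type u) [Category.{v} D] [HasZeroObject D] [HasShift D ℤ]
    [Preadditive D] [∀ n : ℤ, (shiftFunctor D n).Additive] [Pretriangulated D]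
    (S : Set D) : Prop where
  zero_mem : ∀ Z : D, Limits.IsZero Z → Z ∈ S
  iso_closed : ∀ ⦃X Y : D⦄, (X ≅ Y) → X ∈ S → Y ∈ S
  shift_mem : ∀ (X : D) (n : ℤ), X ∈ S → (X⟦n⟧ : D) ∈ S
  ext_mem : ∀ (T : Triangle D), T ∈ (distTriang D) → T.obj₁ ∈ S → T.obj₃ ∈ S → T.obj₂ ∈ S

/-- Right orthogonal `S^⊥`: objects `Y` with `Hom(A, Y) = 0` for all `A ∈ S`. -/
def rightOrth (D : Type u) [Category.{v} D] [Preadditive D] (S : Set D) : Set D :=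
  {Y | ∀ (A : D), A ∈ S → ∀ f : A ⟶ Y, f = 0}

/-- The full triangulated subcategory generated by a set `S` of objects: the smallest
strictly full triangulated subcategory containing `S`. -/
def genTriang (D : Type u) [Category.{v} D] [HasZeroObject D] [HasShift D ℤ]
    [Preadditive D] [∀ n : ℤ, (shiftFunctor D n).Additive] [Pretriangulated D]
    (S : Set D) : Set D :=
  ⋂₀ {T : Set D | IsTriangulatedSub D T ∧ S ⊆ T}

namespace CategoryTheory.ObjectProperty

section Adjoints

variable {C : Type*} [Category C] (P : ObjectProperty C)

def HasCoreflections : Prop :=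
  ∀ Y : C, ∃ X, P X ∧ ∃ f : X ⟶ Y,
    ∀ E, P E → Function.Bijective fun g : E ⟶ X => g ≫ f

def HasReflections : Prop :=
  ∀ Y : C, ∃ X, P X ∧ ∃ u : Y ⟶ X,
    ∀ E, P E → Function.Bijective fun g : X ⟶ E => u ≫ g

lemma isLeftAdjoint_ι_iff : P.ι.IsLeftAdjoint ↔ P.HasCoreflections := by
  rw [Functor.isLeftAdjoint_iff_rightAdjointObjIsDefined_eq_top]
  constructor
  · intro h Y
    have : (P.ι.op ⋙ yoneda.obj Y).IsRepresentable := by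
      rw [← Functor.rightAdjointObjIsDefined_iff, h]; trivial
    let X := (P.ι.op ⋙ yoneda.obj Y).reprX
    let R := (P.ι.op ⋙ yoneda.obj Y).representableBy
    refine ⟨X.obj, X.property, R.homEquiv (𝟙 X), fun E hE => ?_⟩
    let e := (P.fullyFaithfulι.homEquiv (X := ⟨E, hE⟩) (Y := X)).symm
    have : (fun g : E ⟶ X.obj => g ≫ R.homEquiv (𝟙 X)) = R.homEquiv ∘ e := by
      funext g
      rw [Function.comp_apply, ← Category.comp_id (e g), R.homEquiv_comp]
      rfl
    rw [this]
    exact R.homEquiv.bijective.comp e.bijective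
  · intro h
    funext Y
    obtain ⟨X, hX, f, hf⟩ := h Y
    exact eq_true (Functor.RepresentableBy.isRepresentable (Y := ⟨X, hX⟩)
      { homEquiv := fun {E} =>
          P.fullyFaithfulι.homEquiv.trans (Equiv.ofBijective _ (hf E.obj E.property))
        homEquiv_comp := fun _ _ => Category.assoc _ _ _ })

lemma isRightAdjoint_ι_iff : P.ι.IsRightAdjoint ↔ P.HasReflections := by
  rw [Functor.isRightAdjoint_iff_leftAdjointObjIsDefined_eq_top]
  constructor
  · intro h Y
    have : (P.ι ⋙ coyoneda.obj (Opposite.op Y)).IsCorepresentable := by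
      rw [← Functor.leftAdjointObjIsDefined_iff, h]; trivial
    let X := (P.ι ⋙ coyoneda.obj (Opposite.op Y)).coreprX
    let R := (P.ι ⋙ coyoneda.obj (Opposite.op Y)).corepresentableBy
    refine ⟨X.obj, X.property, R.homEquiv (𝟙 X), fun E hE => ?_⟩
    let e := (P.fullyFaithfulι.homEquiv (X := X) (Y := ⟨E, hE⟩)).symm
    have : (fun g : X.obj ⟶ E => R.homEquiv (𝟙 X) ≫ g) = R.homEquiv ∘ e := by
      funext g
      rw [Function.comp_apply, ← Category.id_comp (e g), R.homEquiv_comp]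
      rfl
    rw [this]
    exact R.homEquiv.bijective.comp e.bijective
  · intro h
    funext Y
    obtain ⟨X, hX, u, hu⟩ := h Y
    exact eq_true (Functor.CorepresentableBy.isCorepresentable (X := ⟨X, hX⟩)
      { homEquiv := fun {E} =>
          P.fullyFaithfulι.homEquiv.trans (Equiv.ofBijective _ (hu E.obj E.property))
        homEquiv_comp := fun _ _ => (Category.assoc _ _ _).symm })

lemma hasReflections_iff_op : P.HasReflections ↔ P.op.HasCoreflections := by
  constructor
  · intro h Y
    obtain ⟨X, hX, u, hu⟩ := h Y.unop
    refine ⟨Opposite.op X, hX, u.op, fun E hE => ?_⟩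
    have : (fun g : E ⟶ Opposite.op X => g ≫ u.op) =
        Quiver.Hom.op ∘ (u ≫ ·) ∘ Quiver.Hom.unop := rfl
    rw [this]
    exact (opEquiv _ _).symm.bijective.comp ((hu _ hE).comp (opEquiv _ _).bijective)
  · intro h Y
    obtain ⟨X, hX, f, hf⟩ := h (Opposite.op Y)
    refine ⟨X.unop, hX, f.unop, fun E hE => ?_⟩
    have : (fun g : X.unop ⟶ E => f.unop ≫ g) =
        Quiver.Hom.unop ∘ (· ≫ f) ∘ Quiver.Hom.op := rfl
    rw [this]
    exact (opEquiv _ _).bijective.comp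
      ((hf (Opposite.op E) hE).comp (opEquiv _ _).symm.bijective)

end Adjoints

section Shift

variable {C : Type*} [Category C] {A : Type*} [AddGroup A] [HasShift C A]

lemma bijective_comp_shift_map {P : ObjectProperty C} [P.IsStableUnderShift A] {X Y : C}
    {f : X ⟶ Y} (hf : ∀ E, P E → Function.Bijective fun g : E ⟶ X => g ≫ f) (a : A)
    {E : C} (hE : P E) : Function.Bijective fun g : E ⟶ X⟦a⟧ => g ≫ f⟦a⟧' := by
  let adj := (shiftEquiv C a).symm.toAdjunction
  have h : (fun g : E ⟶ X⟦a⟧ => g ≫ f⟦a⟧') =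
      adj.homEquiv E Y ∘ (· ≫ f) ∘ (adj.homEquiv E X).symm := by
    funext g
    obtain ⟨g, rfl⟩ := (adj.homEquiv E X).surjective g
    simp only [Function.comp_apply, Equiv.symm_apply_apply, adj.homEquiv_naturality_right]
    rfl
  rw [h]
  exact (adj.homEquiv E Y).bijective.comp
    ((hf _ (P.le_shift (-a) _ hE)).comp (adj.homEquiv E X).symm.bijective)

instance {P Q : ObjectProperty C} [P.IsStableUnderShift A] [Q.IsStableUnderShift A] :
    (P ⊔ Q).IsStableUnderShift A where
  isStableUnderShiftBy a := ⟨fun _ hX => hX.imp (P.le_shift a _) (Q.le_shift a _)⟩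

end Shift

section Orthogonal

variable {C : Type*} [Category C] [HasZeroMorphisms C] (P : ObjectProperty C)

lemma op_leftOrthogonal : P.leftOrthogonal.op = P.op.rightOrthogonal := by
  funext X
  exact propext ⟨fun h _ f hY => Quiver.Hom.unop_inj (h f.unop hY),
    fun h _ f hY => Quiver.Hom.op_inj (h f.op hY)⟩

lemma op_rightOrthogonal : P.rightOrthogonal.op = P.op.leftOrthogonal := by
  funext X
  exact propext ⟨fun h _ f hY => Quiver.Hom.unop_inj (h f.unop hY),
    fun h _ f hY => Quiver.Hom.op_inj (h f.op hY)⟩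

end Orthogonal

section Pretriangulated

open Preadditive

variable {C : Type*} [Category C] [Preadditive C] [HasZeroObject C] [HasShift C ℤ]
  [∀ n : ℤ, (shiftFunctor C n).Additive] [Pretriangulated C]

lemma rightOrthogonal_obj₃_of_bijective {P : ObjectProperty C} [P.IsStableUnderShift ℤ]
    {T : Triangle C} (hT : T ∈ distTriang C)
    (h : ∀ E, P E → Function.Bijective fun g : E ⟶ T.obj₁ => g ≫ T.mor₁) :
    P.rightOrthogonal T.obj₃ := by
  intro E g hE
  have hg : g ≫ T.mor₃ = 0 := (bijective_comp_shift_map h 1 hE).injective (by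
    simp only [Category.assoc, comp_distTriang_mor_zero₃₁ T hT, comp_zero, zero_comp])
  obtain ⟨g', rfl⟩ := Triangle.coyoneda_exact₃ T hT g hg
  obtain ⟨g'', rfl⟩ := (h E hE).surjective g'
  simp only [Category.assoc, comp_distTriang_mor_zero₁₂ T hT, comp_zero]

lemma bijective_comp_mor₁_of_rightOrthogonal {P : ObjectProperty C} [P.IsStableUnderShift ℤ]
    {T : Triangle C} (hT : T ∈ distTriang C) (h₃ : P.rightOrthogonal T.obj₃) {W : C}
    (hW : P.rightOrthogonal.leftOrthogonal W) :
    Function.Bijective fun g : W ⟶ T.obj₁ => g ≫ T.mor₁ := by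
  rw [← isColocal_trW] at hW
  exact hW _ (trW.mk _ hT h₃)

lemma bijective_comp_hom₂_of_isIso₁ {P : ObjectProperty C} [P.IsStableUnderShift ℤ]
    {T T' : Triangle C} (φ : T ⟶ T') (hT : T ∈ distTriang C) (hT' : T' ∈ distTriang C)
    [IsIso φ.hom₁]
    (h₃ : ∀ E, P E → Function.Bijective fun g : E ⟶ T.obj₃ => g ≫ φ.hom₃)
    {E : C} (hE : P E) : Function.Bijective fun g : E ⟶ T.obj₂ => g ≫ φ.hom₂ := by
  have h_ker : ∀ f : E ⟶ T.obj₂, f ≫ φ.hom₂ = 0 → f = 0 := by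
    intro f hf
    obtain ⟨g, rfl⟩ := Triangle.coyoneda_exact₂ _ hT f ((h₃ E hE).injective (by
      simp only [Category.assoc, φ.comm₂, reassoc_of% hf, zero_comp]))
    obtain ⟨h, hh⟩ := Triangle.coyoneda_exact₁ _ hT' ((g ≫ φ.hom₁)⟦(1 : ℤ)⟧') (by
      rw [← Functor.map_comp, Category.assoc, ← φ.comm₁, ← Category.assoc, hf,
        Functor.map_zero])
    obtain ⟨k, rfl⟩ := (h₃ _ (P.le_shift 1 _ hE)).surjective h
    have hgk : g⟦(1 : ℤ)⟧' = k ≫ T.mor₃ := by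
      rw [← cancel_mono (φ.hom₁⟦(1 : ℤ)⟧'), ← Functor.map_comp, hh, Category.assoc,
        Category.assoc, φ.comm₃]
    apply (shiftFunctor C (1 : ℤ)).map_injective
    rw [Functor.map_comp, hgk, Category.assoc, comp_distTriang_mor_zero₃₁ _ hT, comp_zero,
      Functor.map_zero]
  refine ⟨fun f₁ f₂ hf => sub_eq_zero.1 (h_ker _ ?_), fun y₂ => ?_⟩
  · rw [sub_comp, sub_eq_zero]
    exact hf
  · obtain ⟨x₃, hx₃ : x₃ ≫ φ.hom₃ = y₂ ≫ T'.mor₂⟩ :=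
      (h₃ E hE).surjective (y₂ ≫ T'.mor₂)
    obtain ⟨x₂, hx₂⟩ := Triangle.coyoneda_exact₃ _ hT x₃
      (by rw [← cancel_mono (φ.hom₁⟦(1 : ℤ)⟧'), Category.assoc, zero_comp, φ.comm₃,
        reassoc_of% hx₃, comp_distTriang_mor_zero₂₃ _ hT', comp_zero])
    obtain ⟨y₁, hy₁⟩ := Triangle.coyoneda_exact₂ _ hT' (y₂ - x₂ ≫ φ.hom₂)
      (by rw [sub_comp, Category.assoc, ← φ.comm₂, ← reassoc_of% hx₂, hx₃, sub_self])
    refine ⟨x₂ + (y₁ ≫ inv φ.hom₁) ≫ T.mor₁, ?_⟩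
    dsimp only
    rw [add_comp, Category.assoc, φ.comm₁, Category.assoc, IsIso.inv_hom_id_assoc, ← hy₁,
      add_sub_cancel]

lemma exists_extensionProduct_coreflection {P Q : ObjectProperty C} [P.IsStableUnderShift ℤ]
    [Q.IsStableUnderShift ℤ] (hPQ : Q ≤ P.rightOrthogonal) (hP : P.HasCoreflections)
    (hQ : Q.HasCoreflections) (Y : C) :
    ∃ X, extensionProduct P Q X ∧ ∃ f : X ⟶ Y,
      ∀ E, (P ⊔ Q) E → Function.Bijective fun g : E ⟶ X => g ≫ f := by
  obtain ⟨A₁, hA₁, a, ha⟩ := hP Y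
  obtain ⟨Y', b, c, hT₂⟩ := distinguished_cocone_triangle a
  have hY' : P.rightOrthogonal Y' := rightOrthogonal_obj₃_of_bijective hT₂ ha
  obtain ⟨A₂, hA₂, ε, hε⟩ := hQ Y'
  obtain ⟨X, i, p, hT₁⟩ := distinguished_cocone_triangle₂ (ε ≫ c)
  have comm₃ : (ε ≫ c) ≫ (𝟙 A₁)⟦(1 : ℤ)⟧' = ε ≫ c := by simp
  obtain ⟨f, comm₁, comm₂⟩ :=
    complete_distinguished_triangle_morphism₂ _ _ hT₁ hT₂ (𝟙 A₁) ε comm₃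
  let φ := Triangle.homMk (Triangle.mk i p (ε ≫ c)) (Triangle.mk a b c) (𝟙 A₁) f ε
    comm₁ comm₂ comm₃
  have : IsIso φ.hom₁ := inferInstanceAs (IsIso (𝟙 A₁))
  have hε' : ∀ E, (P ⊔ Q) E → Function.Bijective fun g : E ⟶ A₂ => g ≫ ε := by
    rintro E (hE | hE)
    · -- for `E ∈ P`, both `E ⟶ A₂` and `E ⟶ Y'` are zero
      exact ⟨fun g₁ g₂ _ => (hPQ _ hA₂ g₁ hE).trans (hPQ _ hA₂ g₂ hE).symm,
        fun g => ⟨0, zero_comp.trans (hY' g hE).symm⟩⟩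
    · exact hε E hE
  exact ⟨X, ⟨_, _, _, _, _, hT₁, hA₁, hA₂⟩, f,
    fun E hE => bijective_comp_hom₂_of_isIso₁ φ hT₁ hT₂ hε' hE⟩

theorem hasCoreflections_of_semiorthogonal {P Q R : ObjectProperty C} [P.IsStableUnderShift ℤ]
    [Q.IsStableUnderShift ℤ] [R.IsTriangulatedClosed₂] [R.IsClosedUnderIsomorphisms]
    (hPQ : Q ≤ P.rightOrthogonal) (hP : P.HasCoreflections) (hQ : Q.HasCoreflections)
    (hR : P ⊔ Q ≤ R) (hR' : R ≤ (P ⊔ Q).rightOrthogonal.leftOrthogonal) :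
    R.HasCoreflections := by
  intro Y
  obtain ⟨X, hX, f, hf⟩ := exists_extensionProduct_coreflection hPQ hP hQ Y
  obtain ⟨N, _, _, hT⟩ := distinguished_cocone_triangle f
  exact ⟨X, extensionProduct_le_of_isTriangulatedClosed₂ (le_sup_left.trans hR)
      (le_sup_right.trans hR) _ hX, f,
    fun W hW => bijective_comp_mor₁_of_rightOrthogonal hT
      (rightOrthogonal_obj₃_of_bijective hT hf) (hR' _ hW)⟩

open Pretriangulated.Opposite in
theorem hasReflections_of_semiorthogonal {P Q R : ObjectProperty C} [P.IsStableUnderShift ℤ]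
    [Q.IsStableUnderShift ℤ] [R.IsTriangulatedClosed₂] [R.IsClosedUnderIsomorphisms]
    (hPQ : Q ≤ P.rightOrthogonal) (hP : P.HasReflections) (hQ : Q.HasReflections)
    (hR : P ⊔ Q ≤ R) (hR' : R ≤ (P ⊔ Q).leftOrthogonal.rightOrthogonal) :
    R.HasReflections := by
  rw [hasReflections_iff_op] at hP hQ ⊢
  refine hasCoreflections_of_semiorthogonal (P := Q.op) (Q := P.op) ?_ hQ hP ?_ ?_
  · intro X hX Y f hY
    exact Quiver.Hom.unop_inj (hPQ _ hY f.unop hX)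
  · exact sup_comm (Q.op) P.op ▸ op_monotone hR
  · rw [sup_comm, ← op_sup, ← op_leftOrthogonal, ← op_rightOrthogonal]
    exact op_monotone hR'

end Pretriangulated

end CategoryTheory.ObjectProperty

namespace IsTriangulatedSub

variable {D : Type u} [Category.{v} D] [Preadditive D] [HasZeroObject D] [HasShift D ℤ]
  [∀ n : ℤ, (shiftFunctor D n).Additive] [Pretriangulated D] {S : Set D}

lemma isStableUnderShift (hS : IsTriangulatedSub D S) :
    ObjectProperty.IsStableUnderShift (· ∈ S) ℤ where
  isStableUnderShiftBy n := ⟨fun X hX => hS.shift_mem X n hX⟩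

lemma isClosedUnderIsomorphisms (hS : IsTriangulatedSub D S) :
    ObjectProperty.IsClosedUnderIsomorphisms (· ∈ S) where
  of_iso e hX := hS.iso_closed e hX

lemma isTriangulatedClosed₂ (hS : IsTriangulatedSub D S) :
    ObjectProperty.IsTriangulatedClosed₂ (· ∈ S) where
  ext₂' T hT h₁ h₃ := ObjectProperty.le_isoClosure _ _ (hS.ext_mem T hT h₁ h₃)

lemma of_isTriangulated (P : ObjectProperty D) [P.IsTriangulated]
    [P.IsClosedUnderIsomorphisms] : IsTriangulatedSub D {X | P X} where
  zero_mem _ hZ := P.prop_of_isZero hZ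
  iso_closed _ _ e hX := P.prop_of_iso e hX
  shift_mem X n hX := P.le_shift n X hX
  ext_mem T hT h₁ h₃ := P.ext_of_isTriangulatedClosed₂ T hT h₁ h₃

end IsTriangulatedSub

section GenTriang

variable {D : Type u} [Category.{v} D] [Preadditive D] [HasZeroObject D] [HasShift D ℤ]
  [∀ n : ℤ, (shiftFunctor D n).Additive] [Pretriangulated D]

lemma subset_genTriang (S : Set D) : S ⊆ genTriang D S :=
  fun _ hX _ hT => hT.2 hX

lemma isTriangulatedSub_genTriang (S : Set D) : IsTriangulatedSub D (genTriang D S) where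
  zero_mem Z hZ _ hT := hT.1.zero_mem Z hZ
  iso_closed _ _ e hX T hT := hT.1.iso_closed e (hX T hT)
  shift_mem X n hX T hT := hT.1.shift_mem X n (hX T hT)
  ext_mem T hT h₁ h₃ U hU := hU.1.ext_mem T hT (h₁ U hU) (h₃ U hU)

lemma genTriang_subset {S T : Set D} (hT : IsTriangulatedSub D T) (hST : S ⊆ T) :
    genTriang D S ⊆ T :=
  fun _ hX => hX T ⟨hT, hST⟩

lemma genTriang_le_rightOrthogonal_leftOrthogonal (P : ObjectProperty D)
    [P.IsStableUnderShift ℤ] : (· ∈ genTriang D {X | P X}) ≤ P.rightOrthogonal.leftOrthogonal :=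
  genTriang_subset (.of_isTriangulated P.rightOrthogonal.leftOrthogonal)
    fun _ hX _ f hY => hY f hX

lemma genTriang_le_leftOrthogonal_rightOrthogonal (P : ObjectProperty D)
    [P.IsStableUnderShift ℤ] : (· ∈ genTriang D {X | P X}) ≤ P.leftOrthogonal.rightOrthogonal :=
  genTriang_subset (.of_isTriangulated P.leftOrthogonal.rightOrthogonal)
    fun _ hX _ f hY => hY f hX

end GenTriang

theorem stmt2
    (D : Type u) [Category.{v} D] [Preadditive D]
    [HasZeroObject D] [HasShift D ℤ] [∀ n : ℤ, (shiftFunctor D n).Additive]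
    [Pretriangulated D]
    (S₁ S₂ : Set D) (hS₁ : IsTriangulatedSub D S₁) (hS₂ : IsTriangulatedSub D S₂)
    (h21 : S₂ ⊆ rightOrth D S₁)
    (h₁r : (ObjectProperty.ι (· ∈ S₁)).IsLeftAdjoint)
    (h₁l : (ObjectProperty.ι (· ∈ S₁)).IsRightAdjoint)
    (h₂r : (ObjectProperty.ι (· ∈ S₂)).IsLeftAdjoint)
    (h₂l : (ObjectProperty.ι (· ∈ S₂)).IsRightAdjoint) :
    (ObjectProperty.ι (· ∈ genTriang D (S₁ ∪ S₂))).IsLeftAdjoint ∧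
      (ObjectProperty.ι (· ∈ genTriang D (S₁ ∪ S₂))).IsRightAdjoint := by
  have := hS₁.isStableUnderShift
  have := hS₂.isStableUnderShift
  have := (isTriangulatedSub_genTriang (S₁ ∪ S₂)).isTriangulatedClosed₂
  have := (isTriangulatedSub_genTriang (S₁ ∪ S₂)).isClosedUnderIsomorphisms
  have h21' : (· ∈ S₂) ≤ ObjectProperty.rightOrthogonal (· ∈ S₁) :=
    fun _ hY _ f hX => h21 hY _ hX f
  open ObjectProperty in
  exact ⟨(isLeftAdjoint_ι_iff _).2 <| hasCoreflections_of_semiorthogonal h21'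
      ((isLeftAdjoint_ι_iff _).1 h₁r) ((isLeftAdjoint_ι_iff _).1 h₂r) (subset_genTriang _)
      (genTriang_le_rightOrthogonal_leftOrthogonal ((· ∈ S₁) ⊔ (· ∈ S₂))),
    (isRightAdjoint_ι_iff _).2 <| hasReflections_of_semiorthogonal h21'
      ((isRightAdjoint_ι_iff _).1 h₁l) ((isRightAdjoint_ι_iff _).1 h₂l) (subset_genTriang _)
      (genTriang_le_leftOrthogonal_rightOrthogonal ((· ∈ S₁) ⊔ (· ∈ S₂)))⟩
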